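/- In a Taylor Cartesian k-differential category, for every map f : A → B, the sequence of Taylor differential polynomials (T^(n)[f])_{n∈ℕ} converges to f with respect to the ultrametric d_D: for every ε > 0 there is N such that for all n ≥ N, d_D(T^(n)[f], f) < ε. In fact d_D(T^(n)[f], f) ≤ 2^(−(n+1)) for all n. -/

import Mathlib

/-! A self-contained formalization of (Cartesian) `k`-differential categories. -/

universe u v w

/-- A Cartesian left `k`-linear category equipped with a differential combinator
satisfying the axioms **[CD.1]**–**[CD.7]**: a Cartesian `k`-differential category.
Composition `comp f g` is in diagrammatic order (`g ∘ f`). -/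
structure CDC (k : Type w) [CommSemiring k] where
  Obj : Type u
  Hom : Obj → Obj → Type v
  idm : ∀ A : Obj, Hom A A
  comp : ∀ {A B C : Obj}, Hom A B → Hom B C → Hom A C
  id_comp : ∀ {A B : Obj} (f : Hom A B), comp (idm A) f = f
  comp_id : ∀ {A B : Obj} (f : Hom A B), comp f (idm B) = f
  assoc : ∀ {A B C D : Obj} (f : Hom A B) (g : Hom B C) (h : Hom C D),
    comp (comp f g) h = comp f (comp g h)
  -- each homset is a `k`-module
  add : ∀ {A B : Obj}, Hom A B → Hom A B → Hom A B
  zero : ∀ {A B : Obj}, Hom A B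
  smul : ∀ {A B : Obj}, k → Hom A B → Hom A B
  add_assoc : ∀ {A B : Obj} (f g h : Hom A B), add (add f g) h = add f (add g h)
  add_comm : ∀ {A B : Obj} (f g : Hom A B), add f g = add g f
  zero_add : ∀ {A B : Obj} (f : Hom A B), add zero f = f
  one_smul : ∀ {A B : Obj} (f : Hom A B), smul 1 f = f
  mul_smul : ∀ {A B : Obj} (r s : k) (f : Hom A B), smul (r * s) f = smul r (smul s f)
  smul_add : ∀ {A B : Obj} (r : k) (f g : Hom A B), smul r (add f g) = add (smul r f) (smul r g)
  add_smul : ∀ {A B : Obj} (r s : k) (f : Hom A B), smul (r + s) f = add (smul r f) (smul s f)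
  zero_smul : ∀ {A B : Obj} (f : Hom A B), smul 0 f = zero
  smul_zero : ∀ {A B : Obj} (r : k), smul r (zero (A := A) (B := B)) = zero
  -- pre-composition is `k`-linear
  comp_add : ∀ {A B C : Obj} (x : Hom A B) (f g : Hom B C),
    comp x (add f g) = add (comp x f) (comp x g)
  comp_smul : ∀ {A B C : Obj} (x : Hom A B) (r : k) (f : Hom B C),
    comp x (smul r f) = smul r (comp x f)
  comp_zero : ∀ {A B C : Obj} (x : Hom A B), comp x (zero (A := B) (B := C)) = zero
  -- finite products
  prod : Obj → Obj → Obj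
  fst : ∀ {A B : Obj}, Hom (prod A B) A
  snd : ∀ {A B : Obj}, Hom (prod A B) B
  lift : ∀ {C A B : Obj}, Hom C A → Hom C B → Hom C (prod A B)
  lift_fst : ∀ {C A B : Obj} (f : Hom C A) (g : Hom C B), comp (lift f g) fst = f
  lift_snd : ∀ {C A B : Obj} (f : Hom C A) (g : Hom C B), comp (lift f g) snd = g
  lift_unique : ∀ {C A B : Obj} (h : Hom C (prod A B)), lift (comp h fst) (comp h snd) = h
  -- projections are `k`-linear
  fst_add : ∀ {C A B : Obj} (f g : Hom C (prod A B)),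
    comp (add f g) fst = add (comp f fst) (comp g fst)
  fst_smul : ∀ {C A B : Obj} (r : k) (f : Hom C (prod A B)),
    comp (smul r f) fst = smul r (comp f fst)
  snd_add : ∀ {C A B : Obj} (f g : Hom C (prod A B)),
    comp (add f g) snd = add (comp f snd) (comp g snd)
  snd_smul : ∀ {C A B : Obj} (r : k) (f : Hom C (prod A B)),
    comp (smul r f) snd = smul r (comp f snd)
  -- the differential combinator
  D : ∀ {A B : Obj}, Hom A B → Hom (prod A A) B
  CD1 : ∀ {A B : Obj} (r s : k) (f g : Hom A B),
    D (add (smul r f) (smul s g)) = add (smul r (D f)) (smul s (D g))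
  CD2 : ∀ {A B C : Obj} (f : Hom A B) (r s : k) (a b c : Hom C A),
    comp (lift a (add (smul r b) (smul s c))) (D f)
      = add (smul r (comp (lift a b) (D f))) (smul s (comp (lift a c) (D f)))
  CD3id : ∀ {A : Obj}, D (idm A) = snd
  CD3fst : ∀ {A B : Obj}, D (fst (A := A) (B := B)) = comp snd fst
  CD3snd : ∀ {A B : Obj}, D (snd (A := A) (B := B)) = comp snd snd
  CD4 : ∀ {A B C : Obj} (f : Hom A B) (g : Hom A C), D (lift f g) = lift (D f) (D g)
  CD5 : ∀ {A B C : Obj} (f : Hom A B) (g : Hom B C),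
    D (comp f g) = comp (lift (comp fst f) (D f)) (D g)
  CD6 : ∀ {A B C : Obj} (f : Hom A B) (a b : Hom C A),
    comp (lift (lift a zero) (lift zero b)) (D (D f)) = comp (lift a b) (D f)
  CD7 : ∀ {A B C : Obj} (f : Hom A B) (a b c d : Hom C A),
    comp (lift (lift a b) (lift c d)) (D (D f))
      = comp (lift (lift a c) (lift b d)) (D (D f))

namespace CDC

variable {k : Type w} [CommSemiring k]

/-- `pow A n` is the product `A × A^{×ⁿ}` (so `pow A 0 = A`), the domain of the
`n`-th derivative `∂⁽ⁿ⁾[f] : A × A^{×ⁿ} → B`. -/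
def pow (X : CDC k) (A : X.Obj) : ℕ → X.Obj
  | 0 => A
  | n + 1 => X.prod (X.pow A n) A

/-- `pad A n : A → A × A^{×ⁿ}` is `a ↦ (a, 0, …, 0)`. -/
def pad (X : CDC k) (A : X.Obj) : (n : ℕ) → X.Hom A (X.pow A n)
  | 0 => X.idm A
  | n + 1 => X.lift (X.pad A n) X.zero

/-- The `n`-th derivative `∂⁽ⁿ⁾[f] : A × A^{×ⁿ} → B`, defined inductively by
`∂⁽⁰⁾[f] = f` and `∂⁽ⁿ⁺¹⁾[f]` is the partial derivative of `∂⁽ⁿ⁾[f]` in its first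
argument (obtained by padding the direction vector with zeroes). -/
def pd (X : CDC k) {A B : X.Obj} : (n : ℕ) → X.Hom A B → X.Hom (X.pow A n) B
  | 0, f => f
  | n + 1, f =>
      X.comp (X.lift X.fst (X.comp X.snd (X.pad A n))) (X.D (X.pd n f))

/-- `diag A n : A → A × A^{×ⁿ}` is `x ↦ (0, x, …, x)`. -/
def diag (X : CDC k) (A : X.Obj) : (n : ℕ) → X.Hom A (X.pow A n)
  | 0 => X.zero
  | n + 1 => X.lift (X.diag A n) (X.idm A)

/-- A map `p` is a `D`-polynomial if `∂⁽ⁿ⁺¹⁾[p] = 0` for some `n`. -/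
def IsPoly (X : CDC k) {A B : X.Obj} (p : X.Hom A B) : Prop :=
  ∃ n : ℕ, X.pd (n + 1) p = X.zero

/-- The `D`-degree of `p`: the least `n` with `∂⁽ⁿ⁺¹⁾[p] = 0`. -/
noncomputable def deg (X : CDC k) {A B : X.Obj} (p : X.Hom A B) : ℕ :=
  sInf {n : ℕ | X.pd (n + 1) p = X.zero}

end CDC

/-- A Cartesian `k`-differential category over a commutative `ℚ≥0`-algebra `k`,
i.e. where every `n! ∈ k` is invertible. -/
structure QCDC (k : Type w) [CommSemiring k] extends CDC k where
  invFact : ℕ → k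
  invFact_spec : ∀ n : ℕ, (Nat.factorial n : k) * invFact n = 1

namespace QCDC

variable {k : Type w} [CommSemiring k]

/-- The `n`-th Taylor differential monomial `M⁽ⁿ⁾[f](x) = (1/n!) · ∂⁽ⁿ⁾[f](0, x, …, x)`. -/
def M (X : QCDC k) {A B : X.Obj} (n : ℕ) (f : X.Hom A B) : X.Hom A B :=
  X.smul (X.invFact n) (X.comp (X.toCDC.diag A n) (X.toCDC.pd n f))

/-- The `n`-th Taylor differential polynomial `T⁽ⁿ⁾[f] = Σ_{j=0}^n M⁽ʲ⁾[f]`. -/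
def T (X : QCDC k) {A B : X.Obj} : ℕ → X.Hom A B → X.Hom A B
  | 0, f => X.M 0 f
  | n + 1, f => X.add (X.T n f) (X.M (n + 1) f)

/-- The `D`-distance: `2^(-n)` for the least `n` where the Taylor monomials of `f` and `g`
disagree, and `0` if they all agree. -/
noncomputable def dD (X : QCDC k) {A B : X.Obj} (f g : X.Hom A B) : ℝ :=
  open Classical in
  if ∀ n : ℕ, X.M n f = X.M n g then 0
  else (2 : ℝ) ^ (-((sInf {n : ℕ | ¬ X.M n f = X.M n g} : ℕ) : ℤ))

/-- A Cartesian `k`-differential category is **Taylor** if maps are completely determined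
by their Taylor differential monomials. -/
def Taylor (X : QCDC k) : Prop :=
  ∀ (A B : X.Obj) (f g : X.Hom A B), (∀ n : ℕ, X.M n f = X.M n g) → f = g

end QCDC

attribute [reducible] CDC.pow

namespace CDC

variable {k : Type w} [CommSemiring k] (X : CDC k)

section Basic

variable {A B C D E F : X.Obj}

lemma add_zero' (f : X.Hom A B) : X.add f X.zero = f := by
  rw [X.add_comm, X.zero_add]

lemma comp_lift' (x : X.Hom A B) (f : X.Hom B C) (g : X.Hom B D) :
    X.comp x (X.lift f g) = X.lift (X.comp x f) (X.comp x g) := by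
  conv_lhs => rw [← X.lift_unique (X.comp x (X.lift f g))]
  rw [X.assoc, X.assoc, X.lift_fst, X.lift_snd]

lemma lift_fst_assoc (f : X.Hom A B) (g : X.Hom A C) (h : X.Hom B D) :
    X.comp (X.lift f g) (X.comp X.fst h) = X.comp f h := by
  rw [← X.assoc, X.lift_fst]

lemma lift_snd_assoc (f : X.Hom A B) (g : X.Hom A C) (h : X.Hom C D) :
    X.comp (X.lift f g) (X.comp X.snd h) = X.comp g h := by
  rw [← X.assoc, X.lift_snd]

lemma comp_zero_fst : X.comp (X.zero : X.Hom C (X.prod A B)) X.fst = X.zero := by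
  rw [← X.zero_smul (X.zero : X.Hom C (X.prod A B)), X.fst_smul, X.zero_smul]

lemma comp_zero_snd : X.comp (X.zero : X.Hom C (X.prod A B)) X.snd = X.zero := by
  rw [← X.zero_smul (X.zero : X.Hom C (X.prod A B)), X.snd_smul, X.zero_smul]

lemma lift_zero_zero : (X.lift X.zero X.zero : X.Hom C (X.prod A B)) = X.zero := by
  conv_rhs => rw [← X.lift_unique (X.zero : X.Hom C (X.prod A B))]
  rw [comp_zero_fst, comp_zero_snd]

lemma lift_add (f f' : X.Hom C A) (g g' : X.Hom C B) :
    X.add (X.lift f g) (X.lift f' g') = X.lift (X.add f f') (X.add g g') := by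
  conv_lhs => rw [← X.lift_unique (X.add (X.lift f g) (X.lift f' g'))]
  rw [X.fst_add, X.snd_add, X.lift_fst, X.lift_fst, X.lift_snd, X.lift_snd]

lemma lift_smul (r : k) (f : X.Hom C A) (g : X.Hom C B) :
    X.smul r (X.lift f g) = X.lift (X.smul r f) (X.smul r g) := by
  conv_lhs => rw [← X.lift_unique (X.smul r (X.lift f g))]
  rw [X.fst_smul, X.snd_smul, X.lift_fst, X.lift_snd]

lemma D_add (f g : X.Hom A B) : X.D (X.add f g) = X.add (X.D f) (X.D g) := by
  have h := X.CD1 1 1 f g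
  rw [X.one_smul, X.one_smul, X.one_smul, X.one_smul] at h
  exact h

lemma D_smul (r : k) (f : X.Hom A B) : X.D (X.smul r f) = X.smul r (X.D f) := by
  have h := X.CD1 r 0 f f
  rw [X.zero_smul, X.zero_smul, add_zero' , add_zero'] at h
  exact h

lemma D_zero : X.D (X.zero : X.Hom A B) = X.zero := by
  have h := D_smul X (0 : k) (X.zero : X.Hom A B)
  rw [X.zero_smul, X.zero_smul] at h
  exact h

lemma CD2add (f : X.Hom B C) (a b c : X.Hom A B) :
    X.comp (X.lift a (X.add b c)) (X.D f)
      = X.add (X.comp (X.lift a b) (X.D f)) (X.comp (X.lift a c) (X.D f)) := by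
  have h := X.CD2 f 1 1 a b c
  rw [X.one_smul, X.one_smul, X.one_smul, X.one_smul] at h
  exact h

lemma CD2smul (f : X.Hom B C) (r : k) (a b : X.Hom A B) :
    X.comp (X.lift a (X.smul r b)) (X.D f) = X.smul r (X.comp (X.lift a b) (X.D f)) := by
  have h := X.CD2 f r 0 a b b
  rw [X.zero_smul, X.zero_smul, add_zero', add_zero'] at h
  exact h

lemma CD2zero (f : X.Hom B C) (a : X.Hom A B) :
    X.comp (X.lift a X.zero) (X.D f) = X.zero := by
  have h := CD2smul X f 0 a X.zero
  rw [X.zero_smul, X.zero_smul] at h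
  exact h

end Basic

end CDC
namespace CDC

variable {k : Type w} [CommSemiring k] (X : CDC k)

section Lin

variable {A B C D E : X.Obj}

/-- `ℓ` is linear: its derivative ignores the base point. -/
def IsLin (ℓ : X.Hom A B) : Prop := X.D ℓ = X.comp X.snd ℓ

/-- `ℓ` preserves zero under precomposition. -/
def ZP (ℓ : X.Hom A B) : Prop := ∀ (C : X.Obj), X.comp (X.zero : X.Hom C A) ℓ = X.zero

/-- `ℓ × ℓ`. -/
def pairmap (ℓ : X.Hom A B) : X.Hom (X.prod A A) (X.prod B B) :=
  X.lift (X.comp X.fst ℓ) (X.comp X.snd ℓ)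

lemma lin_idm : X.IsLin (X.idm A) := by
  rw [IsLin, X.CD3id, X.comp_id]

lemma lin_zero : X.IsLin (X.zero : X.Hom A B) := by
  rw [IsLin, D_zero, X.comp_zero]

lemma lin_fst : X.IsLin (X.fst : X.Hom (X.prod A B) A) := X.CD3fst

lemma lin_snd : X.IsLin (X.snd : X.Hom (X.prod A B) B) := X.CD3snd

lemma lin_lift {f : X.Hom A B} {g : X.Hom A C} (hf : X.IsLin f) (hg : X.IsLin g) :
    X.IsLin (X.lift f g) := by
  rw [IsLin, X.CD4, hf, hg, comp_lift']

lemma lin_comp {f : X.Hom A B} {g : X.Hom B C} (hf : X.IsLin f) (hg : X.IsLin g) :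
    X.IsLin (X.comp f g) := by
  rw [IsLin, X.CD5, hf, hg, lift_snd_assoc, X.assoc]

lemma lin_add {f g : X.Hom A B} (hf : X.IsLin f) (hg : X.IsLin g) :
    X.IsLin (X.add f g) := by
  rw [IsLin, D_add, hf, hg, X.comp_add]

lemma lin_smul {f : X.Hom A B} (r : k) (hf : X.IsLin f) : X.IsLin (X.smul r f) := by
  rw [IsLin, D_smul, hf, X.comp_smul]

lemma zp_idm : X.ZP (X.idm A) := fun C => X.comp_id _

lemma zp_zero : X.ZP (X.zero : X.Hom A B) := fun C => X.comp_zero _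

lemma zp_fst : X.ZP (X.fst : X.Hom (X.prod A B) A) := fun C => comp_zero_fst X

lemma zp_snd : X.ZP (X.snd : X.Hom (X.prod A B) B) := fun C => comp_zero_snd X

lemma zp_lift {f : X.Hom A B} {g : X.Hom A C} (hf : X.ZP f) (hg : X.ZP g) :
    X.ZP (X.lift f g) := by
  intro C'
  rw [comp_lift', hf, hg, lift_zero_zero]

lemma zp_comp {f : X.Hom A B} {g : X.Hom B C} (hf : X.ZP f) (hg : X.ZP g) :
    X.ZP (X.comp f g) := by
  intro C'
  rw [← X.assoc, hf, hg]

lemma zp_add {f g : X.Hom A B} (hf : X.ZP f) (hg : X.ZP g) : X.ZP (X.add f g) := by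
  intro C'
  rw [X.comp_add, hf, hg, X.zero_add]

lemma zp_smul {f : X.Hom A B} (r : k) (hf : X.ZP f) : X.ZP (X.smul r f) := by
  intro C'
  rw [X.comp_smul, hf, X.smul_zero]

lemma D_comp_lin {ℓ : X.Hom A B} (h : X.Hom B C) (hℓ : X.IsLin ℓ) :
    X.D (X.comp ℓ h) = X.comp (X.pairmap ℓ) (X.D h) := by
  rw [X.CD5, hℓ, pairmap]

/-- Differentiating an identity `ℓ ∘ u = ℓ' ∘ v` between composites with linear
precompositions. -/
lemma D_eq {ℓ : X.Hom A B} {ℓ' : X.Hom A C} {u : X.Hom B D} {v : X.Hom C D}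
    (hℓ : X.IsLin ℓ) (hℓ' : X.IsLin ℓ') (e : X.comp ℓ u = X.comp ℓ' v) :
    X.comp (X.pairmap ℓ) (X.D u) = X.comp (X.pairmap ℓ') (X.D v) := by
  rw [← D_comp_lin X u hℓ, ← D_comp_lin X v hℓ', e]

lemma comp_pairmap (x : X.Hom C A) (y : X.Hom C A) (ℓ : X.Hom A B) :
    X.comp (X.lift x y) (X.pairmap ℓ) = X.lift (X.comp x ℓ) (X.comp y ℓ) := by
  rw [pairmap, comp_lift', lift_fst_assoc, lift_snd_assoc]

/-- The strengthened [CD.6] axiom. -/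
lemma CD6' (f : X.Hom A B) (a b d : X.Hom C A) :
    X.comp (X.lift (X.lift a b) (X.lift X.zero d)) (X.D (X.D f))
      = X.comp (X.lift a d) (X.D f) := by
  rw [X.CD7]
  have hbd : X.lift b d = X.add (X.lift b X.zero) (X.lift X.zero d) := by
    rw [lift_add, add_zero', X.zero_add]
  rw [hbd, CD2add, X.CD7, lift_zero_zero, CD2zero, X.CD6, X.zero_add]

end Lin

end CDC
set_option linter.unusedVariables false

namespace CDC

variable {k : Type w} [CommSemiring k]

/-- `eS A n S : A → pow A n`: `x` into the vector slots listed in `S`, zero elsewhere. -/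
def eS (X : CDC k) (A : X.Obj) : (n : ℕ) → (ℕ → Bool) → X.Hom A (X.pow A n)
  | 0, _ => X.zero
  | n+1, S => X.lift (X.eS A n S) (if S n then X.idm A else X.zero)

/-- `zS A n S : pow A n → pow A n`: zero out the vector slots listed in `S`. -/
def zS (X : CDC k) (A : X.Obj) : (n : ℕ) → (ℕ → Bool) → X.Hom (X.pow A n) (X.pow A n)
  | 0, _ => X.idm A
  | n+1, S => X.lift (X.comp X.fst (X.zS A n S)) (if S n then X.zero else X.snd)

/-- `ℓ` applied in each slot. -/
def powmap (X : CDC k) {A B : X.Obj} (ℓ : X.Hom A B) : (n : ℕ) → X.Hom (X.pow A n) (X.pow B n)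
  | 0 => ℓ
  | n+1 => X.lift (X.comp X.fst (X.powmap ℓ n)) (X.comp X.snd ℓ)

/-- The structural map in the recursion for `pd`. -/
def Lm (X : CDC k) (A : X.Obj) (n : ℕ) :
    X.Hom (X.pow A (n+1)) (X.prod (X.pow A n) (X.pow A n)) :=
  X.lift X.fst (X.comp X.snd (X.pad A n))

variable (X : CDC k)

section Fam

variable {A B C : X.Obj}

lemma pd_succ {A B : X.Obj} (n : ℕ) (f : X.Hom A B) :
    X.pd (n+1) f = X.comp (X.Lm A n) (X.D (X.pd n f)) := rfl

lemma lin_pad (n : ℕ) : X.IsLin (X.pad A n) := by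
  induction n with
  | zero => exact lin_idm X
  | succ n ih => exact lin_lift X ih (lin_zero X)

lemma zp_pad (n : ℕ) : X.ZP (X.pad A n) := by
  induction n with
  | zero => exact zp_idm X
  | succ n ih => exact zp_lift X ih (zp_zero X)

lemma lin_diag (n : ℕ) : X.IsLin (X.diag A n) := by
  induction n with
  | zero => exact lin_zero X
  | succ n ih => exact lin_lift X ih (lin_idm X)

lemma zp_diag (n : ℕ) : X.ZP (X.diag A n) := by
  induction n with
  | zero => exact zp_zero X
  | succ n ih => exact zp_lift X ih (zp_idm X)

lemma lin_eS (n : ℕ) (S : ℕ → Bool) : X.IsLin (X.eS A n S) := by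
  induction n with
  | zero => exact lin_zero X
  | succ n ih =>
      refine lin_lift X ih ?_
      cases h : S n
      · simpa [h] using lin_zero X
      · simpa [h] using lin_idm X

lemma zp_eS (n : ℕ) (S : ℕ → Bool) : X.ZP (X.eS A n S) := by
  induction n with
  | zero => exact zp_zero X
  | succ n ih =>
      refine zp_lift X ih ?_
      cases h : S n
      · simpa [h] using zp_zero X
      · simpa [h] using zp_idm X

lemma lin_zS (n : ℕ) (S : ℕ → Bool) : X.IsLin (X.zS A n S) := by
  induction n with
  | zero => exact lin_idm X
  | succ n ih =>
      refine lin_lift X (lin_comp X (lin_fst X) ih) ?_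
      cases h : S n
      · simpa [h] using lin_snd X
      · simpa [h] using lin_zero X

lemma zp_zS (n : ℕ) (S : ℕ → Bool) : X.ZP (X.zS A n S) := by
  induction n with
  | zero => exact zp_idm X
  | succ n ih =>
      refine zp_lift X (zp_comp X (zp_fst X) ih) ?_
      cases h : S n
      · simpa [h] using zp_snd X
      · simpa [h] using zp_zero X

lemma lin_powmap {ℓ : X.Hom A B} (hℓ : X.IsLin ℓ) (n : ℕ) : X.IsLin (X.powmap ℓ n) := by
  induction n with
  | zero => exact hℓ
  | succ n ih => exact lin_lift X (lin_comp X (lin_fst X) ih) (lin_comp X (lin_snd X) hℓ)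

lemma zp_powmap {ℓ : X.Hom A B} (hℓ : X.ZP ℓ) (n : ℕ) : X.ZP (X.powmap ℓ n) := by
  induction n with
  | zero => exact hℓ
  | succ n ih => exact zp_lift X (zp_comp X (zp_fst X) ih) (zp_comp X (zp_snd X) hℓ)

lemma lin_Lm (n : ℕ) : X.IsLin (X.Lm A n) :=
  lin_lift X (lin_fst X) (lin_comp X (lin_snd X) (lin_pad X n))

lemma eS_congr (n : ℕ) {S T : ℕ → Bool} (h : ∀ i < n, S i = T i) :
    X.eS A n S = X.eS A n T := by
  induction n with
  | zero => rfl
  | succ n ih =>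
      simp only [eS]
      rw [ih (fun i hi => h i (Nat.lt_succ_of_lt hi)), h n (Nat.lt_succ_self n)]

lemma eS_empty (n : ℕ) {S : ℕ → Bool} (h : ∀ i < n, S i = false) :
    X.eS A n S = X.zero := by
  induction n with
  | zero => rfl
  | succ n ih =>
      simp only [eS]
      rw [ih (fun i hi => h i (Nat.lt_succ_of_lt hi)), h n (Nat.lt_succ_self n)]
      simpa using lift_zero_zero X

lemma diag_eq_eS (n : ℕ) : X.diag A n = X.eS A n (fun _ => true) := by
  induction n with
  | zero => rfl
  | succ n ih => simp only [diag, eS, if_true, ih]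

lemma eS_comp_zS (n : ℕ) (S T : ℕ → Bool) :
    X.comp (X.eS A n S) (X.zS A n T) = X.eS A n (fun i => S i && !T i) := by
  induction n with
  | zero => exact X.comp_id _
  | succ n ih =>
      simp only [eS, zS]
      rw [comp_lift', lift_fst_assoc, ih]
      rcases Bool.dichotomy (T n) with hT | hT <;> rcases Bool.dichotomy (S n) with hS | hS <;>
        simp [hT, hS, comp_zero, lift_snd]

lemma pad_comp_zS (n : ℕ) (T : ℕ → Bool) :
    X.comp (X.pad A n) (X.zS A n T) = X.pad A n := by
  induction n with
  | zero => exact X.comp_id _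
  | succ n ih =>
      simp only [pad, zS]
      rw [comp_lift', lift_fst_assoc, ih]
      rcases Bool.dichotomy (T n) with hT | hT <;>
        simp [hT, comp_zero, lift_snd]

lemma eS_add_disj (n : ℕ) {S T : ℕ → Bool} (h : ∀ i < n, S i = false ∨ T i = false) :
    X.add (X.eS A n S) (X.eS A n T) = X.eS A n (fun i => S i || T i) := by
  induction n with
  | zero => exact X.zero_add _
  | succ n ih =>
      simp only [eS]
      rw [lift_add, ih (fun i hi => h i (Nat.lt_succ_of_lt hi))]
      rcases h n (Nat.lt_succ_self n) with hS | hT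
      · rcases Bool.dichotomy (T n) with hT | hT <;>
          simp [hS, hT, zero_add, add_zero']
      · rcases Bool.dichotomy (S n) with hS | hS <;>
          simp [hS, hT, zero_add, add_zero']

lemma comp_pad_powmap {ℓ : X.Hom A B} (hℓ : X.ZP ℓ) (n : ℕ) :
    X.comp (X.pad A n) (X.powmap ℓ n) = X.comp ℓ (X.pad B n) := by
  induction n with
  | zero => simp only [pad, powmap]; rw [X.id_comp, X.comp_id]
  | succ n ih =>
      simp only [pad, powmap]
      rw [comp_lift', lift_fst_assoc, lift_snd_assoc, ih, hℓ,
        comp_lift' X ℓ, X.comp_zero]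

lemma comp_diag_powmap {ℓ : X.Hom A B} (hℓ : X.ZP ℓ) (n : ℕ) :
    X.comp (X.diag A n) (X.powmap ℓ n) = X.comp ℓ (X.diag B n) := by
  induction n with
  | zero => simp only [diag, powmap]; rw [X.comp_zero, hℓ]
  | succ n ih =>
      simp only [diag, powmap]
      rw [comp_lift', lift_fst_assoc, lift_snd_assoc, ih, X.id_comp,
        comp_lift' X ℓ, X.comp_id]

lemma pd_add (n : ℕ) (f g : X.Hom A B) :
    X.pd n (X.add f g) = X.add (X.pd n f) (X.pd n g) := by
  induction n with
  | zero => rfl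
  | succ n ih => rw [pd_succ, pd_succ, pd_succ, ih, D_add, X.comp_add]

lemma pd_smul (n : ℕ) (r : k) (f : X.Hom A B) :
    X.pd n (X.smul r f) = X.smul r (X.pd n f) := by
  induction n with
  | zero => rfl
  | succ n ih => rw [pd_succ, pd_succ, ih, D_smul, X.comp_smul]

lemma pd_zero (n : ℕ) : X.pd n (X.zero : X.Hom A B) = X.zero := by
  induction n with
  | zero => rfl
  | succ n ih => rw [pd_succ, ih, D_zero, X.comp_zero]

lemma pd_comp_lin {ℓ : X.Hom A B} (hℓ : X.IsLin ℓ) (hz : X.ZP ℓ) (n : ℕ) (h : X.Hom B C) :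
    X.pd n (X.comp ℓ h) = X.comp (X.powmap ℓ n) (X.pd n h) := by
  induction n with
  | zero => rfl
  | succ n ih =>
      rw [pd_succ, pd_succ, ih, D_comp_lin X _ (lin_powmap X hℓ n), ← X.assoc, ← X.assoc]
      congr 1
      rw [Lm, Lm, comp_pairmap]
      conv_rhs => rw [powmap]
      rw [comp_lift', X.lift_fst, lift_snd_assoc, X.assoc, X.assoc,
        comp_pad_powmap X hz n]

end Fam

end CDC

namespace CDC

variable {k : Type w} [CommSemiring k] (X : CDC k)

section Fam2

variable {A B C : X.Obj}

lemma lift_fst_snd : X.lift X.fst X.snd = X.idm (X.prod A B) := by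
  conv_rhs => rw [← X.lift_unique (X.idm _)]
  rw [X.id_comp, X.id_comp]

lemma zS_empty (n : ℕ) {S : ℕ → Bool} (h : ∀ i < n, S i = false) :
    X.zS A n S = X.idm _ := by
  induction n with
  | zero => rfl
  | succ n ih =>
      simp only [zS]
      rw [ih (fun i hi => h i (Nat.lt_succ_of_lt hi)), h n (Nat.lt_succ_self n), X.comp_id]
      simpa using lift_fst_snd X

lemma comp_zero_pad (n : ℕ) : X.comp (X.zero : X.Hom C A) (X.pad A n) = X.zero :=
  zp_pad X n C

lemma comp_zero_eS (n : ℕ) (S : ℕ → Bool) :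
    X.comp (X.zero : X.Hom C A) (X.eS A n S) = X.zero :=
  zp_eS X n S C

lemma comp_zero_zS (n : ℕ) (S : ℕ → Bool) :
    X.comp (X.zero : X.Hom C (X.pow A n)) (X.zS A n S) = X.zero :=
  zp_zS X n S C

lemma comp_zero_diag (n : ℕ) : X.comp (X.zero : X.Hom C A) (X.diag A n) = X.zero :=
  zp_diag X n C

end Fam2

end CDC
namespace CDC

variable {k : Type w} [CommSemiring k]

/-- Insertion of a tangent vector into vector slot `i`. -/
def Wm (X : CDC k) (A : X.Obj) (j i : ℕ) :
    X.Hom (X.prod (X.pow A j) A) (X.prod (X.pow A j) (X.pow A j)) :=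
  X.lift X.fst (X.comp X.snd (X.eS A j (fun m => m == i)))

/-- Replacement of the contents of vector slot `i`. -/
def Rm (X : CDC k) (A : X.Obj) (j i : ℕ) :
    X.Hom (X.prod (X.pow A j) A) (X.pow A j) :=
  X.add (X.comp X.fst (X.zS A j (fun m => m == i)))
    (X.comp X.snd (X.eS A j (fun m => m == i)))

variable (X : CDC k)

section DLin

variable {A B : X.Obj}

lemma lin_Wm (j i : ℕ) : X.IsLin (X.Wm A j i) :=
  lin_lift X (lin_fst X) (lin_comp X (lin_snd X) (lin_eS X j _))

lemma lin_Rm (j i : ℕ) : X.IsLin (X.Rm A j i) :=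
  lin_add X (lin_comp X (lin_fst X) (lin_zS X j _))
    (lin_comp X (lin_snd X) (lin_eS X j _))

lemma eS_top (j : ℕ) : X.eS A (j+1) (fun m => m == j) = X.lift X.zero (X.idm A) := by
  have h0 : X.eS A j (fun m => m == j) = X.zero :=
    eS_empty X j (fun m hm => by simp [Nat.ne_of_lt hm])
  simp only [eS, h0]
  simp

lemma zS_top (j : ℕ) : X.zS A (j+1) (fun m => m == j) = X.lift X.fst X.zero := by
  have h0 : X.zS A j (fun m => m == j) = X.idm _ :=
    zS_empty X j (fun m hm => by simp [Nat.ne_of_lt hm])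
  simp only [zS, h0]
  rw [X.comp_id]
  simp

lemma eS_lt_top {j i : ℕ} (h : i < j) :
    X.eS A (j+1) (fun m => m == i) = X.lift (X.eS A j (fun m => m == i)) X.zero := by
  simp only [eS, show ((j == i) : Bool) = false by simp [Nat.ne_of_gt h]]
  simp

lemma zS_lt_top {j i : ℕ} (h : i < j) :
    X.zS A (j+1) (fun m => m == i)
      = X.lift (X.comp X.fst (X.zS A j (fun m => m == i))) X.snd := by
  simp only [zS, show ((j == i) : Bool) = false by simp [Nat.ne_of_gt h]]
  simp

/-- `pd j f` is linear in each of its `j` vector slots, in the strong differential sense. -/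
theorem DLIN (f : X.Hom A B) : ∀ (j i : ℕ), i < j →
    X.comp (X.Wm A j i) (X.D (X.pd j f)) = X.comp (X.Rm A j i) (X.pd j f) := by
  intro j
  induction j with
  | zero => exact fun i h => absurd h (Nat.not_lt_zero i)
  | succ j ih =>
    intro i hi
    have hD : X.D (X.pd (j+1) f)
        = X.comp (X.pairmap (X.Lm A j)) (X.D (X.D (X.pd j f))) := by
      rw [pd_succ]; exact D_comp_lin X _ (lin_Lm X j)
    rcases Nat.lt_succ_iff_lt_or_eq.mp hi with hlt | heq
    · -- the slot is one of the inner slots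
      rw [hD, pd_succ, ← X.assoc, ← X.assoc]
      have h1 : X.comp (X.Wm A (j+1) i) (X.pairmap (X.Lm A j))
          = X.lift
              (X.lift (X.comp X.fst X.fst) (X.comp X.fst (X.comp X.snd (X.pad A j))))
              (X.lift (X.comp X.snd (X.eS A j (fun m => m == i))) X.zero) := by
        rw [Wm, eS_lt_top X hlt]
        simp only [Lm, comp_pairmap, comp_lift', lift_fst_assoc,
          lift_snd_assoc, lift_fst, lift_snd, assoc, comp_zero, comp_zero_pad,
          comp_zero_eS, id_comp, comp_id]
      rw [h1, X.CD7]
      have hid := D_eq X (lin_Wm X j i) (lin_Rm X j i) (ih i hlt)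
      have h3 : X.comp
          (X.lift (X.lift (X.comp X.fst X.fst) X.snd)
            (X.lift (X.comp X.fst (X.comp X.snd (X.pad A j))) X.zero))
          (X.pairmap (X.Wm A j i))
          = X.lift
              (X.lift (X.comp X.fst X.fst) (X.comp X.snd (X.eS A j (fun m => m == i))))
              (X.lift (X.comp X.fst (X.comp X.snd (X.pad A j))) X.zero) := by
        rw [Wm]
        simp only [comp_pairmap, comp_lift', lift_fst_assoc, lift_snd_assoc,
          lift_fst, lift_snd, assoc, comp_zero, comp_zero_eS]
      have hR : X.Rm A (j+1) i
          = X.lift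
              (X.add (X.comp X.fst (X.comp X.fst (X.zS A j (fun m => m == i))))
                (X.comp X.snd (X.eS A j (fun m => m == i))))
              (X.comp X.fst X.snd) := by
        rw [Rm, eS_lt_top X hlt, zS_lt_top X hlt]
        simp only [comp_lift', lift_add, add_zero', zero_add, assoc, comp_zero,
          lift_fst, lift_snd]
      have h4L : X.comp
          (X.lift (X.lift (X.comp X.fst X.fst) X.snd)
            (X.lift (X.comp X.fst (X.comp X.snd (X.pad A j))) X.zero))
          (X.pairmap (X.Rm A j i))
          = X.lift
              (X.add (X.comp X.fst (X.comp X.fst (X.zS A j (fun m => m == i))))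
                (X.comp X.snd (X.eS A j (fun m => m == i))))
              (X.comp X.fst (X.comp X.snd (X.pad A j))) := by
        rw [Rm]
        simp only [comp_pairmap, comp_add, comp_lift', lift_fst_assoc, lift_snd_assoc,
          lift_fst, lift_snd, assoc, comp_zero, comp_zero_eS, comp_zero_zS,
          pad_comp_zS, add_zero']
      have h4R : X.comp (X.Rm A (j+1) i) (X.Lm A j)
          = X.lift
              (X.add (X.comp X.fst (X.comp X.fst (X.zS A j (fun m => m == i))))
                (X.comp X.snd (X.eS A j (fun m => m == i))))
              (X.comp X.fst (X.comp X.snd (X.pad A j))) := by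
        rw [hR, Lm]
        simp only [comp_lift', lift_fst, lift_snd_assoc, assoc]
      rw [← h3, X.assoc, hid, ← X.assoc, h4L, ← h4R, X.assoc]
    · -- the slot is the top slot
      rw [heq, hD, pd_succ, ← X.assoc, ← X.assoc]
      have h1 : X.comp (X.Wm A (j+1) j) (X.pairmap (X.Lm A j))
          = X.lift
              (X.lift (X.comp X.fst X.fst) (X.comp X.fst (X.comp X.snd (X.pad A j))))
              (X.lift X.zero (X.comp X.snd (X.pad A j))) := by
        rw [Wm, eS_top]
        simp only [Lm, comp_pairmap, comp_lift', lift_fst_assoc, lift_snd_assoc,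
          lift_fst, lift_snd, assoc, comp_zero, comp_zero_pad, id_comp, comp_id]
      have hR2 : X.Rm A (j+1) j = X.lift (X.comp X.fst X.fst) X.snd := by
        rw [Rm, eS_top, zS_top]
        simp only [comp_lift', lift_add, add_zero', zero_add, assoc, comp_zero,
          lift_fst, lift_snd, comp_id, id_comp]
      have h2 : X.comp (X.Rm A (j+1) j) (X.Lm A j)
          = X.lift (X.comp X.fst X.fst) (X.comp X.snd (X.pad A j)) := by
        rw [hR2, Lm]
        simp only [comp_lift', lift_fst, lift_snd_assoc]
      rw [h1, h2, CD6']

end DLin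

end CDC
namespace CDC

variable {k : Type w} [CommSemiring k]

/-- The generic replacement map for the higher-order chain computation. -/
def Xi (X : CDC k) {V Q : X.Obj} (η : X.Hom V Q) (ζ : X.Hom Q Q) :
    (m : ℕ) → X.Hom (X.prod (X.pow Q m) V) (X.pow Q m)
  | 0 => X.add (X.comp X.fst ζ) (X.comp X.snd η)
  | m+1 =>
      X.lift (X.comp (X.lift (X.comp X.fst X.fst) X.snd) (X.Xi η ζ m))
        (X.comp (X.comp X.fst X.snd) ζ)

/-- The generic insertion map for the higher-order chain computation. -/
def Wp (X : CDC k) {V Q : X.Obj} (η : X.Hom V Q) (m : ℕ) :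
    X.Hom (X.prod (X.pow Q m) V) (X.prod (X.pow Q m) (X.pow Q m)) :=
  X.lift X.fst (X.comp X.snd (X.comp η (X.pad Q m)))

variable (X : CDC k)

section ULem

variable {V Q B : X.Obj} (η : X.Hom V Q) (ζ : X.Hom Q Q)

lemma lin_Xi (hη : X.IsLin η) (hζ : X.IsLin ζ) (m : ℕ) : X.IsLin (X.Xi η ζ m) := by
  induction m with
  | zero =>
      exact lin_add X (lin_comp X (lin_fst X) hζ) (lin_comp X (lin_snd X) hη)
  | succ m ih =>
      exact lin_lift X
        (lin_comp X (lin_lift X (lin_comp X (lin_fst X) (lin_fst X)) (lin_snd X)) ih)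
        (lin_comp X (lin_comp X (lin_fst X) (lin_snd X)) hζ)

lemma lin_Wp (hη : X.IsLin η) (m : ℕ) : X.IsLin (X.Wp η m) :=
  lin_lift X (lin_fst X) (lin_comp X (lin_snd X) (lin_comp X hη (lin_pad X m)))

lemma XiPad (zη : X.ZP η) (zζ : X.ZP ζ) (m : ℕ) :
    X.comp (X.lift (X.pad Q m) (X.zero : X.Hom Q V)) (X.Xi η ζ m)
      = X.comp ζ (X.pad Q m) := by
  induction m with
  | zero =>
      simp only [Xi, pad]
      rw [X.comp_add, lift_fst_assoc, lift_snd_assoc, X.id_comp, zη, add_zero' , X.comp_id]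
  | succ m ih =>
      simp only [Xi, pad]
      rw [comp_lift']
      have hσ : X.comp (X.lift (X.lift (X.pad Q m) (X.zero : X.Hom Q Q)) (X.zero : X.Hom Q V))
          (X.comp (X.lift (X.comp X.fst X.fst) X.snd) (X.Xi η ζ m))
          = X.comp ζ (X.pad Q m) := by
        rw [← X.assoc, comp_lift', lift_fst_assoc, X.lift_fst, X.lift_snd, ih]
      rw [hσ]
      have h2 : X.comp (X.lift (X.lift (X.pad Q m) (X.zero : X.Hom Q Q)) (X.zero : X.Hom Q V))
          (X.comp (X.comp X.fst X.snd) ζ) = X.zero := by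
        rw [X.assoc, lift_fst_assoc, ← X.assoc, X.lift_snd, zζ]
      rw [h2, comp_lift' X ζ, X.comp_zero]

/-- Derivatives in a direction inserted into slot `i` of the base argument. -/
theorem ULEM {h : X.Hom Q B} (hη : X.IsLin η) (hζ : X.IsLin ζ) (zη : X.ZP η) (zζ : X.ZP ζ)
    (hbase : X.comp (X.lift X.fst (X.comp X.snd η)) (X.D h)
      = X.comp (X.add (X.comp X.fst ζ) (X.comp X.snd η)) h) :
    ∀ m : ℕ, X.comp (X.Wp η m) (X.D (X.pd m h)) = X.comp (X.Xi η ζ m) (X.pd m h) := by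
  intro m
  induction m with
  | zero =>
      show X.comp (X.Wp η 0) (X.D h) = X.comp (X.Xi η ζ 0) h
      rw [Wp, Xi]
      have : X.comp η (X.pad Q 0) = η := by simp only [pad]; rw [X.comp_id]
      rw [this]
      exact hbase
  | succ m ih =>
      have hD : X.D (X.pd (m+1) h)
          = X.comp (X.pairmap (X.Lm Q m)) (X.D (X.D (X.pd m h))) := by
        rw [pd_succ]; exact D_comp_lin X _ (lin_Lm X m)
      rw [hD, pd_succ, ← X.assoc, ← X.assoc]
      have hz1 : X.comp (X.zero : X.Hom (X.prod (X.pow Q (m+1)) V) V)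
          (X.comp η (X.pad Q m)) = X.zero := by
        rw [← X.assoc, zη, comp_zero_pad]
      have h1 : X.comp (X.Wp η (m+1)) (X.pairmap (X.Lm Q m))
          = X.lift
              (X.lift (X.comp X.fst X.fst) (X.comp X.fst (X.comp X.snd (X.pad Q m))))
              (X.lift (X.comp X.snd (X.comp η (X.pad Q m))) X.zero) := by
        rw [Wp]
        simp only [Lm, pad, comp_pairmap, comp_lift', lift_fst_assoc, lift_snd_assoc,
          lift_fst, lift_snd, assoc, comp_zero, comp_zero_pad, id_comp, comp_id]
      rw [h1, X.CD7]
      have hid := D_eq X (lin_Wp X η hη m) (lin_Xi X η ζ hη hζ m) ih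
      have h3 : X.comp
          (X.lift (X.lift (X.comp X.fst X.fst) X.snd)
            (X.lift (X.comp X.fst (X.comp X.snd (X.pad Q m))) X.zero))
          (X.pairmap (X.Wp η m))
          = X.lift
              (X.lift (X.comp X.fst X.fst) (X.comp X.snd (X.comp η (X.pad Q m))))
              (X.lift (X.comp X.fst (X.comp X.snd (X.pad Q m))) X.zero) := by
        rw [Wp]
        simp only [comp_pairmap, comp_lift', lift_fst_assoc, lift_snd_assoc,
          lift_fst, lift_snd, assoc, comp_zero, hz1]
      have h4L : X.comp
          (X.lift (X.lift (X.comp X.fst X.fst) X.snd)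
            (X.lift (X.comp X.fst (X.comp X.snd (X.pad Q m))) X.zero))
          (X.pairmap (X.Xi η ζ m))
          = X.lift
              (X.comp (X.lift (X.comp X.fst X.fst) X.snd) (X.Xi η ζ m))
              (X.comp X.fst (X.comp X.snd (X.comp ζ (X.pad Q m)))) := by
        rw [comp_pairmap]
        congr 1
        have : (X.lift (X.comp X.fst (X.comp X.snd (X.pad Q m))) X.zero
            : X.Hom (X.prod (X.pow Q (m+1)) V) (X.prod (X.pow Q m) V))
            = X.comp (X.comp X.fst X.snd) (X.lift (X.pad Q m) X.zero) := by
          rw [comp_lift', X.comp_zero, X.assoc]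
        rw [this, X.assoc, XiPad X η ζ zη zζ m, ← X.assoc, ← X.assoc, X.assoc, X.assoc]
      have h4R : X.comp (X.Xi η ζ (m+1)) (X.Lm Q m)
          = X.lift
              (X.comp (X.lift (X.comp X.fst X.fst) X.snd) (X.Xi η ζ m))
              (X.comp X.fst (X.comp X.snd (X.comp ζ (X.pad Q m)))) := by
        rw [Xi, Lm]
        simp only [comp_lift', lift_fst, lift_snd_assoc, assoc]
      rw [← h3, X.assoc, hid, ← X.assoc, h4L, ← h4R, X.assoc]

end ULem

end CDC
namespace CDC

variable {k : Type w} [CommSemiring k]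

/-- Hom-sets are additive commutative monoids. -/
def homMonoid (X : CDC k) (A B : X.Obj) : AddCommMonoid (X.Hom A B) where
  add := X.add
  zero := X.zero
  add_assoc := X.add_assoc
  zero_add := X.zero_add
  add_zero := add_zero' X
  add_comm := X.add_comm
  nsmul := fun n x => Nat.rec X.zero (fun _ acc => X.add x acc) n
  nsmul_zero := fun _ => rfl
  nsmul_succ := fun _ x => X.add_comm x _

attribute [local instance] homMonoid

/-- The configuration maps of the Faà di Bruno computation at the origin: the base point
has `x` in the slots of `S`, and each direction has `x` in the slots not in `S`. -/
def cfg (X : CDC k) (A : X.Obj) (j : ℕ) :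
    (m : ℕ) → (ℕ → Bool) → X.Hom A (X.pow (X.pow A j) m)
  | 0, S => X.eS A j S
  | m+1, S => X.lift (X.cfg A j m S) (X.eS A j (fun i => !S i))

/-- Adding slot `i` to `S`. -/
def SUpd (S : ℕ → Bool) (i : ℕ) : ℕ → Bool := fun m => (m == i) || S m

variable (X : CDC k)

section Sums

variable {A B C : X.Obj} {ι : Type}

lemma add_def (a b : X.Hom A B) : a + b = X.add a b := rfl

lemma zero_def : (0 : X.Hom A B) = X.zero := rfl

lemma comp_sum (s : Finset ι) (x : X.Hom A B) (g : ι → X.Hom B C) :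
    X.comp x (∑ i ∈ s, g i) = ∑ i ∈ s, X.comp x (g i) := by
  classical
  induction s using Finset.induction_on with
  | empty => simp only [Finset.sum_empty, zero_def, comp_zero]
  | insert _ _ hns ih =>
      rw [Finset.sum_insert hns, Finset.sum_insert hns, add_def, add_def, X.comp_add, ih]

lemma smul_sum (s : Finset ι) (r : k) (g : ι → X.Hom A B) :
    X.smul r (∑ i ∈ s, g i) = ∑ i ∈ s, X.smul r (g i) := by
  classical
  induction s using Finset.induction_on with
  | empty => simp only [Finset.sum_empty, zero_def, smul_zero]
  | insert _ _ hns ih =>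
      rw [Finset.sum_insert hns, Finset.sum_insert hns, add_def, add_def, X.smul_add, ih]

lemma add_comp_pad (n : ℕ) (u v : X.Hom C A) :
    X.comp (X.add u v) (X.pad A n) = X.add (X.comp u (X.pad A n)) (X.comp v (X.pad A n)) := by
  induction n with
  | zero => simp only [pad]; rw [X.comp_id, X.comp_id, X.comp_id]
  | succ n ih =>
      simp only [pad]
      rw [comp_lift', comp_lift', comp_lift', X.comp_zero, X.comp_zero, X.comp_zero,
        ih, lift_add, X.zero_add]

lemma sum_comp_pad (s : Finset ι) (n : ℕ) (g : ι → X.Hom C A) :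
    X.comp (∑ i ∈ s, g i) (X.pad A n) = ∑ i ∈ s, X.comp (g i) (X.pad A n) := by
  classical
  induction s using Finset.induction_on with
  | empty => simp only [Finset.sum_empty, zero_def, comp_zero_pad]
  | insert _ _ hns ih =>
      rw [Finset.sum_insert hns, Finset.sum_insert hns, add_def, add_def, add_comp_pad, ih]

lemma sum_D_dir (s : Finset ι) (f : X.Hom B C) (a : X.Hom A B) (g : ι → X.Hom A B) :
    X.comp (X.lift a (∑ i ∈ s, g i)) (X.D f)
      = ∑ i ∈ s, X.comp (X.lift a (g i)) (X.D f) := by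
  classical
  induction s using Finset.induction_on with
  | empty => simp only [Finset.sum_empty, zero_def, CD2zero]
  | insert _ _ hns ih =>
      rw [Finset.sum_insert hns, Finset.sum_insert hns, add_def, add_def, CD2add, ih]

lemma sum_lift (s : Finset ι) (u : ι → X.Hom C A) (v : ι → X.Hom C B) :
    (∑ i ∈ s, X.lift (u i) (v i)) = X.lift (∑ i ∈ s, u i) (∑ i ∈ s, v i) := by
  classical
  induction s using Finset.induction_on with
  | empty => simp only [Finset.sum_empty, zero_def, lift_zero_zero]
  | insert _ _ hns ih =>
      rw [Finset.sum_insert hns, Finset.sum_insert hns, Finset.sum_insert hns,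
        add_def, add_def, add_def, ih, lift_add]

/-- Decomposition of a slot-set map as the sum of single-slot maps. -/
lemma eS_sum (j : ℕ) (T : ℕ → Bool) :
    X.eS A j T
      = ∑ i ∈ (Finset.range j).filter (fun i => T i = true),
          X.eS A j (fun m => m == i) := by
  induction j with
  | zero =>
      simp only [Finset.range_zero, Finset.filter_empty, Finset.sum_empty, zero_def]
      rfl
  | succ j ih =>
      have hzero : ∀ s : Finset ℕ, (∑ _i ∈ s, (X.zero : X.Hom A A)) = X.zero :=
        fun s => Finset.sum_const_zero
      have hsum : ∀ s : Finset ℕ, (∀ i ∈ s, i < j) →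
          (∑ i ∈ s, X.eS A (j+1) (fun m => m == i))
            = X.lift (∑ i ∈ s, X.eS A j (fun m => m == i)) X.zero := by
        intro s hs
        have he : ∀ i ∈ s, X.eS A (j+1) (fun m => m == i)
            = X.lift (X.eS A j (fun m => m == i)) X.zero :=
          fun i hi => eS_lt_top X (hs i hi)
        rw [Finset.sum_congr rfl he, sum_lift]
        congr 1
        exact hzero s
      have hsplit : (Finset.range (j+1)).filter (fun i => T i = true)
          = if T j = true then
              insert j ((Finset.range j).filter (fun i => T i = true))
            else (Finset.range j).filter (fun i => T i = true) := by
        rw [Finset.range_add_one, Finset.filter_insert]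
      have hmemsub : ∀ i ∈ (Finset.range j).filter (fun i => T i = true), i < j :=
        fun i hi => Finset.mem_range.mp (Finset.mem_filter.mp hi).1
      rw [hsplit]
      have hexp : X.eS A (j+1) T
          = X.lift (X.eS A j T) (if T j = true then X.idm A else X.zero) := rfl
      by_cases hT : T j = true
      · have h5 : X.eS A (j+1) T = X.lift (X.eS A j T) (X.idm A) := by
          rw [hexp, hT]
          rfl
        rw [h5, if_pos hT,
          Finset.sum_insert (fun hmem => absurd (hmemsub j hmem) (lt_irrefl j)),
          hsum _ hmemsub, ← ih, eS_top, add_def, lift_add, X.zero_add, add_zero']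
      · have hTf : T j = false := by
          cases h : T j
          · rfl
          · exact absurd h hT
        have h5 : X.eS A (j+1) T = X.lift (X.eS A j T) X.zero := by
          rw [hexp, hTf]
          rfl
        rw [h5, if_neg hT, hsum _ hmemsub, ← ih]

end Sums

section Phi

variable {A B : X.Obj}

/-- A vanishing slot kills the composite with `pd j f`. -/
lemma zeroslot (f : X.Hom A B) (j i : ℕ) (hij : i < j) {S : ℕ → Bool}
    (hSi : S i = false) : X.comp (X.eS A j S) (X.pd j f) = X.zero := by
  have dlin := DLIN X f j i hij
  have h2 := congrArg (fun t => X.comp (X.lift (X.eS A j S) (X.zero : X.Hom A A)) t) dlin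
  have hL : X.comp (X.lift (X.eS A j S) (X.zero : X.Hom A A))
      (X.comp (X.Wm A j i) (X.D (X.pd j f))) = X.zero := by
    rw [← X.assoc, Wm, comp_lift', X.lift_fst, lift_snd_assoc, comp_zero_eS, CD2zero]
  have hR : X.comp (X.lift (X.eS A j S) (X.zero : X.Hom A A))
      (X.comp (X.Rm A j i) (X.pd j f)) = X.comp (X.eS A j S) (X.pd j f) := by
    rw [← X.assoc, Rm, X.comp_add, lift_fst_assoc, lift_snd_assoc, comp_zero_eS,
      add_zero', eS_comp_zS]
    congr 1
    refine eS_congr X j (fun m hm => ?_)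
    by_cases hmi : m = i
    · subst hmi
      rw [hSi]
      rfl
    · have : (m == i) = false := by simp [hmi]
      rw [this]
      simp
  rw [hL, hR] at h2
  exact h2.symm

/-- Composing a configuration with the replacement map adds a slot. -/
lemma cfgXi (j i : ℕ) (hij : i < j) {S : ℕ → Bool} (hSi : S i = false) : ∀ m : ℕ,
    X.comp (X.lift (X.cfg A j m S) (X.idm A))
        (X.Xi (X.eS A j (fun m => m == i)) (X.zS A j (fun m => m == i)) m)
      = X.cfg A j m (SUpd S i) := by
  intro m
  induction m with
  | zero =>
      show X.comp (X.lift (X.eS A j S) (X.idm A)) _ = X.eS A j (SUpd S i)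
      rw [Xi, X.comp_add, lift_fst_assoc, lift_snd_assoc, X.id_comp, eS_comp_zS]
      have h1 : X.eS A j (fun m => S m && !(m == i)) = X.eS A j S := by
        refine eS_congr X j (fun m hm => ?_)
        by_cases hmi : m = i
        · subst hmi; rw [hSi]; rfl
        · have : (m == i) = false := by simp [hmi]
          rw [this]; simp
      rw [h1, eS_add_disj X j (fun m hm => by
        by_cases hmi : m = i
        · subst hmi; exact Or.inl hSi
        · exact Or.inr (by simp [hmi]))]
      exact eS_congr X j (fun m hm => by simp [SUpd, Bool.or_comm])
  | succ m ih =>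
      have hw : X.lift (X.cfg A j (m+1) S) (X.idm A)
          = X.lift (X.lift (X.cfg A j m S) (X.eS A j (fun i' => !S i'))) (X.idm A) := rfl
      rw [hw, Xi, comp_lift']
      have hσ : X.comp (X.lift (X.lift (X.cfg A j m S) (X.eS A j (fun i' => !S i'))) (X.idm A))
          (X.comp (X.lift (X.comp X.fst X.fst) X.snd)
            (X.Xi (X.eS A j (fun m => m == i)) (X.zS A j (fun m => m == i)) m))
          = X.cfg A j m (SUpd S i) := by
        rw [← X.assoc, comp_lift', lift_fst_assoc, X.lift_fst, X.lift_snd]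
        exact ih
      have hζ : X.comp (X.lift (X.lift (X.cfg A j m S) (X.eS A j (fun i' => !S i'))) (X.idm A))
          (X.comp (X.comp X.fst X.snd) (X.zS A j (fun m => m == i)))
          = X.eS A j (fun i' => !(SUpd S i i')) := by
        rw [X.assoc, lift_fst_assoc, ← X.assoc, X.lift_snd, eS_comp_zS]
        exact eS_congr X j (fun m hm => by simp [SUpd, Bool.not_or, Bool.and_comm])
      rw [hσ, hζ]
      rfl

/-- The expansion of one derivative step into a sum over slots. -/
lemma phi_step (f : X.Hom A B) (j m : ℕ) (S : ℕ → Bool) :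
    X.comp (X.cfg A j (m+1) S) (X.pd (m+1) (X.pd j f))
      = ∑ i ∈ (Finset.range j).filter (fun i => (!S i) = true),
          X.comp (X.cfg A j m (SUpd S i)) (X.pd m (X.pd j f)) := by
  rw [pd_succ, ← X.assoc]
  have h1 : X.comp (X.cfg A j (m+1) S) (X.Lm (X.pow A j) m)
      = X.lift (X.cfg A j m S)
          (X.comp (X.eS A j (fun i => !S i)) (X.pad (X.pow A j) m)) := by
    show X.comp (X.lift (X.cfg A j m S) (X.eS A j (fun i => !S i))) _ = _
    rw [Lm, comp_lift', X.lift_fst, lift_snd_assoc]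
  rw [h1, eS_sum X j (fun i => !S i), sum_comp_pad, sum_D_dir]
  refine Finset.sum_congr rfl (fun i hi => ?_)
  have hij : i < j := Finset.mem_range.mp (Finset.mem_filter.mp hi).1
  have hSi : S i = false := by
    have := (Finset.mem_filter.mp hi).2
    cases h : S i
    · rfl
    · rw [h] at this; exact absurd this (by simp)
  have hbase := DLIN X f j i hij
  rw [Wm, Rm] at hbase
  have hU := ULEM X (X.eS A j (fun m => m == i)) (X.zS A j (fun m => m == i))
    (lin_eS X j _) (lin_zS X j _) (zp_eS X j _) (zp_zS X j _) hbase m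
  have h2 := congrArg (fun t => X.comp (X.lift (X.cfg A j m S) (X.idm A)) t) hU
  have hL : X.comp (X.lift (X.cfg A j m S) (X.idm A))
      (X.comp (X.Wp (X.eS A j (fun m => m == i)) m) (X.D (X.pd m (X.pd j f))))
      = X.comp (X.lift (X.cfg A j m S)
          (X.comp (X.eS A j (fun m => m == i)) (X.pad (X.pow A j) m)))
        (X.D (X.pd m (X.pd j f))) := by
    rw [← X.assoc, Wp, comp_lift', X.lift_fst, lift_snd_assoc, X.id_comp]
  have hR : X.comp (X.lift (X.cfg A j m S) (X.idm A))
      (X.comp (X.Xi (X.eS A j (fun m => m == i)) (X.zS A j (fun m => m == i)) m)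
        (X.pd m (X.pd j f)))
      = X.comp (X.cfg A j m (SUpd S i)) (X.pd m (X.pd j f)) := by
    rw [← X.assoc, cfgXi X j i hij hSi m]
  rw [hL, hR] at h2
  exact h2

/-- The value of the Faà di Bruno configurations. -/
lemma phi_val (f : X.Hom A B) (j : ℕ) : ∀ (m : ℕ) (S : ℕ → Bool),
    (∀ i, S i = true → i < j) →
    X.comp (X.cfg A j m S) (X.pd m (X.pd j f))
      = if m + ((Finset.range j).filter (fun i => S i = true)).card = j
        then (Nat.factorial m) • (X.comp (X.diag A j) (X.pd j f))
        else X.zero := by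
  intro m
  induction m with
  | zero =>
      intro S hS
      by_cases hc : 0 + ((Finset.range j).filter (fun i => S i = true)).card = j
      · rw [if_pos hc]
        rw [Nat.zero_add] at hc
        have hsub : (Finset.range j).filter (fun i => S i = true) ⊆ Finset.range j :=
          Finset.filter_subset _ _
        have heq : (Finset.range j).filter (fun i => S i = true) = Finset.range j :=
          Finset.eq_of_subset_of_card_le hsub (by rw [hc, Finset.card_range])
        have hfull : ∀ i < j, S i = true := by
          intro i hi
          have : i ∈ (Finset.range j).filter (fun i => S i = true) := by
            rw [heq]; exact Finset.mem_range.mpr hi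
          exact (Finset.mem_filter.mp this).2
        have hdiag : X.cfg A j 0 S = X.diag A j := by
          show X.eS A j S = _
          rw [diag_eq_eS]
          exact eS_congr X j (fun i hi => hfull i hi)
        rw [hdiag, Nat.factorial_zero, one_nsmul]
        rfl
      · rw [if_neg hc]
        rw [Nat.zero_add] at hc
        have : ∃ i, i < j ∧ S i = false := by
          by_contra hno
          push_neg at hno
          apply hc
          have heq : (Finset.range j).filter (fun i => S i = true) = Finset.range j := by
            refine Finset.filter_true_of_mem (fun i hi => ?_)
            have hni := hno i (Finset.mem_range.mp hi)
            cases h : S i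
            · exact absurd h hni
            · rfl
          rw [heq, Finset.card_range]
        obtain ⟨i, hij, hSi⟩ := this
        exact zeroslot X f j i hij hSi
  | succ m ih =>
      intro S hS
      rw [phi_step X f j m S]
      have hterm : ∀ i ∈ (Finset.range j).filter (fun i => (!S i) = true),
          X.comp (X.cfg A j m (SUpd S i)) (X.pd m (X.pd j f))
            = if m + 1 + ((Finset.range j).filter (fun i => S i = true)).card = j
              then (Nat.factorial m) • (X.comp (X.diag A j) (X.pd j f))
              else X.zero := by
        intro i hi
        have hij : i < j := Finset.mem_range.mp (Finset.mem_filter.mp hi).1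
        have hSi : S i = false := by
          have h2 := (Finset.mem_filter.mp hi).2
          cases h : S i
          · rfl
          · rw [h] at h2; exact absurd h2 (by simp)
        have hbound : ∀ i', SUpd S i i' = true → i' < j := by
          intro i' hi'
          have hor : (i' == i) = true ∨ S i' = true := by
            simpa [SUpd, Bool.or_eq_true] using hi'
          rcases hor with h | h
          · exact (beq_iff_eq.mp h) ▸ hij
          · exact hS i' h
        have hins : (Finset.range j).filter (fun m' => SUpd S i m' = true)
            = insert i ((Finset.range j).filter (fun m' => S m' = true)) := by
          ext m'
          simp only [Finset.mem_filter, Finset.mem_insert, Finset.mem_range, SUpd,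
            Bool.or_eq_true, beq_iff_eq]
          constructor
          · rintro ⟨hm, (rfl | hSm)⟩
            · exact Or.inl rfl
            · exact Or.inr ⟨hm, hSm⟩
          · rintro (rfl | ⟨hm, hSm⟩)
            · exact ⟨hij, Or.inl rfl⟩
            · exact ⟨hm, Or.inr hSm⟩
        have hcardi : ((Finset.range j).filter (fun m' => SUpd S i m' = true)).card
            = ((Finset.range j).filter (fun m' => S m' = true)).card + 1 := by
          rw [hins, Finset.card_insert_of_notMem (by simp [Finset.mem_filter, hSi])]
        rw [ih (SUpd S i) hbound, hcardi]
        exact if_congr (by omega) rfl rfl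
      rw [Finset.sum_congr rfl hterm]
      by_cases hcond : m + 1 + ((Finset.range j).filter (fun i => S i = true)).card = j
      · rw [if_pos hcond]
        simp only [if_pos hcond]
        rw [Finset.sum_const]
        have hcard : ((Finset.range j).filter (fun i => (!S i) = true)).card = m + 1 := by
          have hpn := Finset.card_filter_add_card_filter_not
            (s := Finset.range j) (p := fun i => S i = true)
          have hco : (Finset.range j).filter (fun i => ¬(S i = true))
              = (Finset.range j).filter (fun i => (!S i) = true) := by
            refine Finset.filter_congr (fun i _ => ?_)
            cases h : S i <;> simp [h]
          rw [Finset.card_range, hco] at hpn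
          omega
        rw [hcard, smul_smul, ← Nat.factorial_succ]
      · rw [if_neg hcond]
        simp only [if_neg hcond]
        exact Finset.sum_const_zero

end Phi

end CDC
namespace CDC

variable {k : Type w} [CommSemiring k] (X : CDC k)

attribute [local instance] homMonoid

section Last

variable {A B : X.Obj}

lemma nsmul_eq_smul (n : ℕ) (x : X.Hom A B) : n • x = X.smul ((n : ℕ) : k) x := by
  induction n with
  | zero =>
      show X.zero = X.smul ((0 : ℕ) : k) x
      rw [Nat.cast_zero, X.zero_smul]
  | succ n ih =>
      show X.add x (n • x) = X.smul (((n+1 : ℕ)) : k) x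
      rw [ih, Nat.cast_succ, X.add_smul, X.one_smul, X.add_comm]

lemma diag_diag_cfg (j : ℕ) : ∀ m : ℕ,
    X.comp (X.diag A j) (X.diag (X.pow A j) m) = X.cfg A j m (fun _ => false) := by
  intro m
  induction m with
  | zero =>
      show X.comp (X.diag A j) X.zero = X.cfg A j 0 (fun _ => false)
      rw [X.comp_zero]
      exact (eS_empty X j (fun _ _ => rfl)).symm
  | succ m ih =>
      show X.comp (X.diag A j) (X.lift (X.diag (X.pow A j) m) (X.idm _)) = _
      rw [comp_lift', ih, X.comp_id, diag_eq_eS]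
      rfl

end Last

end CDC

namespace QCDC

variable {k : Type w} [CommSemiring k] (X : QCDC k)

attribute [local instance] CDC.homMonoid

section MProps

variable {A B : X.Obj}

lemma M_add (n : ℕ) (f g : X.Hom A B) :
    X.M n (X.toCDC.add f g) = X.toCDC.add (X.M n f) (X.M n g) := by
  rw [M, M, M, CDC.pd_add, X.toCDC.comp_add, X.toCDC.smul_add]

/-- The key orthogonality of the Taylor monomials: `M^(c)[M^(j)[f]] = δ_{cj} M^(j)[f]`. -/
theorem M_M (f : X.Hom A B) (c j : ℕ) :
    X.M c (X.M j f) = if c = j then X.M j f else X.toCDC.zero := by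
  have hpd : X.toCDC.pd c (X.M j f)
      = X.toCDC.smul (X.invFact j)
          (X.toCDC.comp (X.toCDC.powmap (X.toCDC.diag A j) c)
            (X.toCDC.pd c (X.toCDC.pd j f))) := by
    rw [M, CDC.pd_smul, CDC.pd_comp_lin X.toCDC (CDC.lin_diag X.toCDC j)
      (CDC.zp_diag X.toCDC j) c]
  have hS : ∀ i : ℕ, (fun (_ : ℕ) => false) i = true → i < j := by
    intro i hi; exact absurd hi (by simp)
  have hcard : ((Finset.range j).filter (fun i => (fun (_ : ℕ) => false) i = true)).card = 0 := by
    simp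
  have h2 : X.toCDC.comp (X.toCDC.diag A c)
      (X.toCDC.comp (X.toCDC.powmap (X.toCDC.diag A j) c) (X.toCDC.pd c (X.toCDC.pd j f)))
      = X.toCDC.comp (X.toCDC.cfg A j c (fun _ => false)) (X.toCDC.pd c (X.toCDC.pd j f)) := by
    rw [← X.toCDC.assoc, CDC.comp_diag_powmap X.toCDC (CDC.zp_diag X.toCDC j) c,
      CDC.diag_diag_cfg]
  have hval := CDC.phi_val X.toCDC f j c (fun _ => false) hS
  rw [hcard] at hval
  by_cases hcj : c = j
  · subst hcj
    rw [M, hpd, X.toCDC.comp_smul, h2, hval, if_pos (by omega), if_pos rfl,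
      CDC.nsmul_eq_smul, ← X.toCDC.mul_smul, ← X.toCDC.mul_smul, mul_assoc,
      mul_comm (X.invFact c) ((Nat.factorial c : k)), X.invFact_spec c, mul_one]
    rfl
  · rw [M, hpd, X.toCDC.comp_smul, h2, hval, if_neg (by omega), if_neg hcj,
      X.toCDC.smul_zero, X.toCDC.smul_zero]

/-- Monomials of Taylor polynomials. -/
theorem M_T (f : X.Hom A B) (c : ℕ) : ∀ n : ℕ,
    X.M c (X.T n f) = if c ≤ n then X.M c f else X.toCDC.zero := by
  intro n
  induction n with
  | zero =>
      show X.M c (X.M 0 f) = _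
      rw [M_M]
      by_cases hc : c = 0
      · subst hc; rw [if_pos rfl, if_pos (le_refl 0)]
      · rw [if_neg hc, if_neg (fun h => hc (Nat.le_zero.mp h))]
  | succ n ih =>
      show X.M c (X.toCDC.add (X.T n f) (X.M (n+1) f)) = _
      rw [M_add, ih, M_M]
      by_cases h1 : c ≤ n
      · rw [if_pos h1, if_neg (by omega), if_pos (by omega), CDC.add_zero']
      · by_cases h2 : c = n + 1
        · subst h2
          rw [if_neg h1, if_pos rfl, if_pos (le_refl _), X.toCDC.zero_add]
        · rw [if_neg h1, if_neg h2, if_neg (by omega), X.toCDC.zero_add]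

end MProps

end QCDC
/-- In a Taylor Cartesian `k`-differential category, the sequence of
Taylor polynomials of `f` converges to `f` in the ultrametric `d_D`; in fact
`d_D(T⁽ⁿ⁾[f], f) ≤ 2^(-(n+1))`. -/
theorem taylor_series_converges {k : Type w} [CommSemiring k] (X : QCDC k)
    (hX : X.Taylor) {A B : X.Obj} (f : X.Hom A B) :
    (∀ n : ℕ, X.dD (X.T n f) f ≤ (2 : ℝ) ^ (-((n : ℤ) + 1))) ∧
      ∀ ε : ℝ, 0 < ε → ∃ N : ℕ, ∀ n : ℕ, N ≤ n → X.dD (X.T n f) f < ε := by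
  have key : ∀ n c : ℕ, c ≤ n → X.M c (X.T n f) = X.M c f := by
    intro n c hc
    rw [QCDC.M_T X f c n, if_pos hc]
  have bound : ∀ n : ℕ, X.dD (X.T n f) f ≤ (2 : ℝ) ^ (-((n : ℤ) + 1)) := by
    intro n
    rw [QCDC.dD]
    split_ifs with h
    · positivity
    · push_neg at h
      have hne : {m : ℕ | ¬ X.M m (X.T n f) = X.M m f}.Nonempty := h
      have hmem := Nat.sInf_mem hne
      have hgt : n + 1 ≤ sInf {m : ℕ | ¬ X.M m (X.T n f) = X.M m f} := by
        by_contra hlt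
        push_neg at hlt
        exact hmem (key n _ (Nat.lt_succ_iff.mp hlt))
      apply zpow_le_zpow_right₀ one_le_two
      have : ((n : ℤ) + 1) ≤ ((sInf {m : ℕ | ¬ X.M m (X.T n f) = X.M m f} : ℕ) : ℤ) := by
        exact_mod_cast hgt
      omega
  refine ⟨bound, ?_⟩
  intro ε hε
  obtain ⟨N, hN⟩ := exists_pow_lt_of_lt_one hε (by norm_num : (1/2 : ℝ) < 1)
  refine ⟨N, fun n hn => ?_⟩
  have h1 : (2 : ℝ) ^ (-((n : ℤ) + 1)) = (1/2 : ℝ) ^ (n + 1) := by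
    rw [show (-((n : ℤ) + 1)) = -(((n+1 : ℕ) : ℤ)) by push_cast; ring,
      zpow_neg, zpow_natCast, one_div, inv_pow]
  have h2 : (1/2 : ℝ) ^ (n + 1) ≤ (1/2 : ℝ) ^ N :=
    pow_le_pow_of_le_one (by norm_num) (by norm_num) (by omega)
  calc X.dD (X.T n f) f ≤ (2 : ℝ) ^ (-((n : ℤ) + 1)) := bound n
    _ = (1/2 : ℝ) ^ (n + 1) := h1
    _ ≤ (1/2 : ℝ) ^ N := h2
    _ < ε := hN
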